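/- If H is twice differentiable on (0,∞) with H'·H'' ≠ 0 and satisfies Bonnet's third-order equation (1/2)·(H''/H')' + H' - (ν/sinh(νx))²·(H² + H')/H' = 0, then the quantity (H''/(2H') + ν·coth(νx))² + H' + (ν/sinh(νx))²·H²/H' + 2ν·coth(νx)·H is constant in x (Hazzidakis' first integral). -/

import Mathlib

/-!
Differentiate the candidate integral and eliminate `(H''/H')'` with Bonnet's equation: every
term cancels, using only `coth' = -1/sinh²`. A function with vanishing derivative on the
connected set `(0, ∞)` is constant.
-/

open Real

theorem hasDerivAt_coth_mul (ν x : ℝ) (hs : sinh (ν * x) ≠ 0) :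
    HasDerivAt (fun y => cosh (ν * y) / sinh (ν * y)) (-ν / sinh (ν * x) ^ 2) x := by
  have hlin : HasDerivAt (fun y => ν * y) ν x := hasDerivAt_const_mul ν
  refine (hlin.cosh.div hlin.sinh hs).congr_deriv ?_
  field_simp
  linear_combination (-ν) * cosh_sq (ν * x)

theorem hasDerivAt_div_sinh_mul_sq (ν x : ℝ) (hs : sinh (ν * x) ≠ 0) :
    HasDerivAt (fun y => (ν / sinh (ν * y)) ^ 2)
      (-2 * ν ^ 3 * cosh (ν * x) / sinh (ν * x) ^ 3) x := by
  have hlin : HasDerivAt (fun y => ν * y) ν x := hasDerivAt_const_mul ν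
  refine (((hasDerivAt_const x ν).div hlin.sinh hs).pow 2).congr_deriv ?_
  simp only [Pi.div_apply, Nat.reduceSub, pow_one]
  field_simp
  ring

/-- With `P = H'` and `Q = H'' / H'`, Hazzidakis' first integral of Bonnet's equation. -/
noncomputable def hazzidakisIntegral (ν : ℝ) (H P Q : ℝ → ℝ) (x : ℝ) : ℝ :=
  (Q x / 2 + ν * (cosh (ν * x) / sinh (ν * x))) ^ 2 + P x +
    (ν / sinh (ν * x)) ^ 2 * H x ^ 2 / P x + 2 * ν * (cosh (ν * x) / sinh (ν * x)) * H x

theorem hasDerivAt_hazzidakisIntegral {ν x q' : ℝ} {H P Q : ℝ → ℝ}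
    (hs : sinh (ν * x) ≠ 0) (hP : P x ≠ 0) (hH : HasDerivAt H (P x) x)
    (hPQ : HasDerivAt P (Q x * P x) x) (hQ : HasDerivAt Q q' x)
    (hBonnet : (1 / 2) * q' + P x - (ν / sinh (ν * x)) ^ 2 * (H x ^ 2 + P x) / P x = 0) :
    HasDerivAt (hazzidakisIntegral ν H P Q) 0 x := by
  have hcoth := hasDerivAt_coth_mul ν x hs
  have hD := (((((hQ.div_const 2).add (hcoth.const_mul ν)).pow 2).add hPQ).add
    (((hasDerivAt_div_sinh_mul_sq ν x hs).mul (hH.pow 2)).div hPQ hP)).add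
    ((hcoth.const_mul (2 * ν)).mul hH)
  refine hD.congr_deriv ?_
  have hq' : q' = 2 * (ν / sinh (ν * x)) ^ 2 * (H x ^ 2 + P x) / P x - 2 * P x := by
    linear_combination 2 * hBonnet
  rw [hq']
  simp only [Pi.add_apply, Pi.mul_apply, Pi.pow_apply, Nat.reduceSub, pow_one]
  field_simp
  ring

theorem hazzidakis_first_integral_general (ν : ℝ) (hν : 0 < ν) (H : ℝ → ℝ)
    (hH1 : ∀ x ∈ Set.Ioi (0:ℝ), HasDerivAt H (deriv H x) x)
    (hH2 : ∀ x ∈ Set.Ioi (0:ℝ), HasDerivAt (deriv H) (deriv (deriv H) x) x)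
    (hH3 : ∀ x ∈ Set.Ioi (0:ℝ),
      HasDerivAt (fun y => deriv (deriv H) y / deriv H y)
        (deriv (fun y => deriv (deriv H) y / deriv H y) x) x)
    (hH' : ∀ x ∈ Set.Ioi (0:ℝ), deriv H x ≠ 0)
    (hBonnet : ∀ x ∈ Set.Ioi (0:ℝ),
      (1/2) * deriv (fun y => deriv (deriv H) y / deriv H y) x + deriv H x -
        (ν / Real.sinh (ν * x)) ^ 2 * ((H x) ^ 2 + deriv H x) / deriv H x = 0) :
    ∃ c : ℝ, ∀ x ∈ Set.Ioi (0:ℝ),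
      (deriv (deriv H) x / (2 * deriv H x) +
          ν * (Real.cosh (ν * x) / Real.sinh (ν * x))) ^ 2 +
        deriv H x + (ν / Real.sinh (ν * x)) ^ 2 * (H x) ^ 2 / deriv H x +
        2 * ν * (Real.cosh (ν * x) / Real.sinh (ν * x)) * H x = c := by
  have hderiv : ∀ x ∈ Set.Ioi (0:ℝ), HasDerivAt
      (hazzidakisIntegral ν H (deriv H) fun y => deriv (deriv H) y / deriv H y) 0 x := by
    intro x hx
    refine hasDerivAt_hazzidakisIntegral (sinh_pos_iff.2 (mul_pos hν hx)).ne' (hH' x hx)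
      (hH1 x hx) ?_ (hH3 x hx) (hBonnet x hx)
    rw [div_mul_cancel₀ _ (hH' x hx)]
    exact hH2 x hx
  obtain ⟨c, hc⟩ := isOpen_Ioi.exists_is_const_of_deriv_eq_zero isPreconnected_Ioi
    (fun x hx => (hderiv x hx).differentiableAt.differentiableWithinAt)
    (fun x hx => (hderiv x hx).deriv)
  refine ⟨c, fun x hx => ?_⟩
  rw [← hc x hx, hazzidakisIntegral, div_div, mul_comm (deriv H x)]

theorem hazzidakis_first_integral (ν : ℝ) (hν : 0 < ν) (H : ℝ → ℝ)
    (hH1 : ∀ x ∈ Set.Ioi (0:ℝ), HasDerivAt H (deriv H x) x)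
    (hH2 : ∀ x ∈ Set.Ioi (0:ℝ), HasDerivAt (deriv H) (deriv (deriv H) x) x)
    (hH3 : ∀ x ∈ Set.Ioi (0:ℝ),
      HasDerivAt (fun y => deriv (deriv H) y / deriv H y)
        (deriv (fun y => deriv (deriv H) y / deriv H y) x) x)
    (hH' : ∀ x ∈ Set.Ioi (0:ℝ), deriv H x ≠ 0)
    (hH'' : ∀ x ∈ Set.Ioi (0:ℝ), deriv (deriv H) x ≠ 0)
    (hBonnet : ∀ x ∈ Set.Ioi (0:ℝ),
      (1/2) * deriv (fun y => deriv (deriv H) y / deriv H y) x + deriv H x -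
        (ν / Real.sinh (ν * x)) ^ 2 * ((H x) ^ 2 + deriv H x) / deriv H x = 0) :
    ∃ c : ℝ, ∀ x ∈ Set.Ioi (0:ℝ),
      (deriv (deriv H) x / (2 * deriv H x) +
          ν * (Real.cosh (ν * x) / Real.sinh (ν * x))) ^ 2 +
        deriv H x + (ν / Real.sinh (ν * x)) ^ 2 * (H x) ^ 2 / deriv H x +
        2 * ν * (Real.cosh (ν * x) / Real.sinh (ν * x)) * H x = c :=
  hazzidakis_first_integral_general ν hν H hH1 hH2 hH3 hH' hBonnet
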